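/- If a family (i_m)_{m ∈ ℤ} of complex numbers and γ ∈ ℤ satisfy 2(m−n)·i_{m+n} = (m+γ)·i_m + (−n−γ)·i_n for all m, n ∈ ℤ, together with the constraint that for every n ∈ ℤ there exists k_n ∈ ℂ with (γ−n)·k_n = i_0 forcing i_0 = 0 when γ = 0, then i_m = 0 for all m ∈ ℤ. -/

import Mathlib

/-!
The diagonal `n = m` of the companion equation gives `i = γ k`, which settles `γ = 0`; at
`(γ, 0)` it then gives `i γ = 0`. For `γ ≠ 0` the main equation at `(0, γ)` gives `i 0 = 0`,
and at `(m, 0)` it gives `(m - γ) i m = γ i 0 = 0`.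
-/

section

variable {K : Type*} [CommRing K]

def HalfDerivationEq (γ : ℤ) (i : ℤ → K) : Prop :=
  ∀ m n : ℤ, 2 * ((m - n : ℤ) : K) * i (m + n) = ((m + γ : ℤ) : K) * i m + ((-n - γ : ℤ) : K) * i n

def CompanionEq (γ : ℤ) (i k : ℤ → K) : Prop :=
  ∀ m n : ℤ, 2 * ((m - n : ℤ) : K) * k (m + n) = i m + ((m - n - γ : ℤ) : K) * k n

namespace CompanionEq

variable {γ : ℤ} {i k : ℤ → K}

theorem apply_eq_mul (hk : CompanionEq γ i k) (p : ℤ) : i p = γ * k p := by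
  have hpp := hk p p
  push_cast at hpp
  linear_combination -hpp

theorem apply_self (hk : CompanionEq γ i k) : i γ = 0 := by
  have hγ0 := hk γ 0
  push_cast at hγ0
  rw [add_zero] at hγ0
  linear_combination hγ0 + 2 * hk.apply_eq_mul γ

end CompanionEq

namespace HalfDerivationEq

variable [IsDomain K] [CharZero K] {γ : ℤ} {i : ℤ → K}

theorem apply_zero (h : HalfDerivationEq γ i) (hγ : γ ≠ 0) : i 0 = 0 := by
  have h0γ := h 0 γ
  push_cast at h0γ
  rw [zero_add] at h0γ
  have : (γ : K) * i 0 = 0 := by linear_combination -h0γ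
  exact (mul_eq_zero.mp this).resolve_left (Int.cast_ne_zero.mpr hγ)

theorem apply_eq_zero_of_ne (h : HalfDerivationEq γ i) (hγ : γ ≠ 0) {m : ℤ} (hm : m ≠ γ) :
    i m = 0 := by
  have hm0 := h m 0
  push_cast at hm0
  rw [add_zero] at hm0
  have : ((m : K) - γ) * i m = 0 := by linear_combination hm0 - (γ : K) * h.apply_zero hγ
  exact (mul_eq_zero.mp this).resolve_left (sub_ne_zero.mpr (Int.cast_injective.ne hm))

end HalfDerivationEq

end

theorem half_derivation_coeff_i
    (i : ℤ → ℂ) (γ : ℤ)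
    (h : ∀ m n : ℤ, 2 * ((m - n : ℤ) : ℂ) * i (m + n)
        = ((m + γ : ℤ) : ℂ) * i m + ((-n - γ : ℤ) : ℂ) * i n)
    (hk : ∃ k : ℤ → ℂ, ∀ m n : ℤ, 2 * ((m - n : ℤ) : ℂ) * k (m + n)
        = i m + ((m - n - γ : ℤ) : ℂ) * k n) :
    ∀ m : ℤ, i m = 0 := by
  obtain ⟨k, hk⟩ := hk
  have hk : CompanionEq γ i k := hk
  have h : HalfDerivationEq γ i := h
  intro m
  by_cases hγ : γ = 0
  · rw [hk.apply_eq_mul m, hγ, Int.cast_zero, zero_mul]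
  by_cases hm : m = γ
  · exact hm ▸ hk.apply_self
  · exact h.apply_eq_zero_of_ne hγ hm
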